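/- arXiv:1109.1054 — 2 statements merged into one kernel-verified Lean document; each statement's English description precedes it below -/
import Mathlib

section
/- Let q be a real number with q > 1 (or a formal parameter), and define rational numbers A_ν for ν ∈ ℕ by: A_0 = 1; for ν ≥ 1, A_ν = q^(−ν) + [ν even]·q^(−3ν/2) + (1 − q^(−2)) · ∑_{0 < a < b, a+b=ν} q^(−(2a+b)), where [ν even] is 1 if ν is even and 0 otherwise. Then in ℝ[[X]] one has the identity (1 − q^(−1)X)·(1 − q^(−3)X²) · ∑_{ν ≥ 0} A_ν X^ν = 1 − q^(−6) X³. -/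
/-!
With `t = q⁻¹`, the series `∑ A_ν X^ν` splits as `G + E - 1 + (1 - t²) P`, where
`G = ∑ t^ν X^ν`, `E = ∑_{ν even} t^(3ν/2) X^ν` and `P` is the generating series of the pair
sums (the `- 1` corrects the constant term, where the formula would give `2`). Each piece is
killed by a simple factor: `(1 - tX) G = 1`, `(1 - t³X²) E = 1`, and `(1 - tX) P = t⁴X³ E`,
because passing from `ν` to `ν + 1` multiplies every pair sum term by `t` except for the new
pair `(a, a + 1)` with `2a + 1 = ν + 1`. The identity is then ring arithmetic, valid over any
commutative ring.
-/

open PowerSeries Finset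

section CommRing

variable {R : Type*} [CommRing R]

theorem coeff_one_sub_C_mul_X_pow_mul (c : R) (k n : ℕ) (p : R⟦X⟧) :
    coeff n ((1 - C c * X ^ k) * p) = coeff n p - if k ≤ n then c * coeff (n - k) p else 0 := by
  rw [sub_mul, one_mul, map_sub, mul_assoc, coeff_C_mul, coeff_X_pow_mul', mul_ite, mul_zero]

theorem one_sub_C_mul_X_mul_mk_pow (t : R) : (1 - C t * X) * PowerSeries.mk (t ^ ·) = 1 := by
  have h := congrArg (rescale t) (mk_one_mul_one_sub_eq_one R)
  simpa only [map_mul, rescale_mk, map_sub, map_one, rescale_X, Pi.one_apply, mul_one,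
    mul_comm] using h

theorem one_sub_C_pow_three_mul_X_sq_mul_mk (t : R) :
    (1 - C (t ^ 3) * X ^ 2) * PowerSeries.mk (fun n => if Even n then t ^ (3 * n / 2) else 0) =
      1 := by
  ext (_ | _ | n) <;> simp only [coeff_one_sub_C_mul_X_pow_mul, coeff_mk, coeff_one]
  · simp
  · simp
  · rw [if_pos (by omega : 2 ≤ n + 1 + 1), if_neg (by omega : n + 1 + 1 ≠ 0),
      show n + 1 + 1 - 2 = n by omega, show 3 * (n + 1 + 1) / 2 = 3 * n / 2 + 3 by omega]
    simp only [Nat.even_add_one, not_not]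
    split_ifs <;> ring

theorem sum_filter_pairs_eq_sum_Ico (t : R) (ν : ℕ) :
    ∑ p ∈ (range (ν + 1) ×ˢ range (ν + 1)).filter
        (fun p => 0 < p.1 ∧ p.1 < p.2 ∧ p.1 + p.2 = ν),
      t ^ (2 * p.1 + p.2) = ∑ a ∈ Ico 1 ((ν + 1) / 2), t ^ (ν + a) := by
  have hpairs : (range (ν + 1) ×ˢ range (ν + 1)).filter
      (fun p => 0 < p.1 ∧ p.1 < p.2 ∧ p.1 + p.2 = ν)
      = (Ico 1 ((ν + 1) / 2)).image (fun a => (a, ν - a)) := by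
    ext ⟨a, b⟩
    simp only [mem_filter, mem_product, mem_range, mem_image, mem_Ico, Prod.mk.injEq]
    constructor
    · rintro ⟨-, h0, hab, hsum⟩
      exact ⟨a, ⟨h0, by omega⟩, rfl, by omega⟩
    · rintro ⟨a, ⟨h0, ha⟩, rfl, rfl⟩
      omega
  rw [hpairs, sum_image fun a _ b _ h => (Prod.mk.inj h).1]
  refine sum_congr rfl fun a ha => ?_
  rw [mem_Ico] at ha
  congr 1
  omega

theorem one_sub_C_mul_X_mul_mk_sum_Ico (t : R) :
    (1 - C t * X) * PowerSeries.mk (fun ν => ∑ a ∈ Ico 1 ((ν + 1) / 2), t ^ (ν + a)) =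
      C (t ^ 4) * X ^ 3 * PowerSeries.mk (fun n => if Even n then t ^ (3 * n / 2) else 0) := by
  conv_lhs => rw [← pow_one X]
  ext (_ | _ | _ | n) <;>
    simp only [coeff_one_sub_C_mul_X_pow_mul, mul_assoc, coeff_C_mul, coeff_X_pow_mul',
      coeff_mk]
  · simp
  · simp
  · simp
  rw [if_pos (by omega), if_pos (by omega), show n + 1 + 1 + 1 - 1 = n + 2 by omega,
    show n + 1 + 1 + 1 - 3 = n by omega, mul_sum]
  rcases Nat.even_or_odd' n with ⟨m, rfl | rfl⟩
  · rw [show (2 * m + 1 + 1 + 1 + 1) / 2 = m + 1 + 1 by omega,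
      show (2 * m + 2 + 1) / 2 = m + 1 by omega, sum_Ico_succ_top (by omega),
      if_pos (even_two_mul m), show 3 * (2 * m) / 2 = 3 * m by omega]
    simp only [sum_congr rfl fun a _ => (pow_succ' t (2 * m + 2 + a)).symm]
    ring_nf
  · rw [show (2 * m + 1 + 1 + 1 + 1 + 1) / 2 = m + 2 by omega,
      show (2 * m + 1 + 2 + 1) / 2 = m + 2 by omega, if_neg (Nat.not_even_two_mul_add_one m)]
    simp only [sum_congr rfl fun a _ => (pow_succ' t (2 * m + 1 + 2 + a)).symm]
    ring_nf

theorem A_star_euler_factor_commRing (t : R) (A : ℕ → R) (hA0 : A 0 = 1)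
    (hA : ∀ ν : ℕ, 1 ≤ ν → A ν =
      t ^ ν + (if Even ν then t ^ (3 * ν / 2) else 0) +
        (1 - t ^ 2) *
          ∑ p ∈ (range (ν + 1) ×ˢ range (ν + 1)).filter
              (fun p => 0 < p.1 ∧ p.1 < p.2 ∧ p.1 + p.2 = ν),
            t ^ (2 * p.1 + p.2)) :
    (1 - C t * X) * (1 - C (t ^ 3) * X ^ 2) * PowerSeries.mk A = 1 - C (t ^ 6) * X ^ 3 := by
  set E := PowerSeries.mk fun n => if Even n then t ^ (3 * n / 2) else 0
  set P := PowerSeries.mk fun ν => ∑ a ∈ Ico 1 ((ν + 1) / 2), t ^ (ν + a)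
  have hA_eq : PowerSeries.mk A = PowerSeries.mk (t ^ ·) + E - 1 + C (1 - t ^ 2) * P := by
    ext (_ | ν)
    · simp [E, P, hA0]
    · rw [map_add, map_sub, map_add, coeff_C_mul, coeff_mk, coeff_mk, coeff_mk, coeff_mk,
        coeff_one, if_neg ν.succ_ne_zero, sub_zero, hA (ν + 1) ν.succ_pos,
        sum_filter_pairs_eq_sum_Ico]
  have hG := one_sub_C_mul_X_mul_mk_pow t
  have hE : (1 - C (t ^ 3) * X ^ 2) * E = 1 := one_sub_C_pow_three_mul_X_sq_mul_mk t
  have hP : (1 - C t * X) * P = C (t ^ 4) * X ^ 3 * E := one_sub_C_mul_X_mul_mk_sum_Ico t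
  rw [hA_eq]
  simp only [map_sub, map_one, map_pow] at hE hP ⊢
  linear_combination (1 - C t ^ 3 * X ^ 2) * hG + (1 - C t * X) * hE +
    (1 - C t ^ 2) * (1 - C t ^ 3 * X ^ 2) * hP + (1 - C t ^ 2) * C t ^ 4 * X ^ 3 * hE

end CommRing

theorem A_star_euler_factor_general (q : ℝ) (A : ℕ → ℝ)
    (hA0 : A 0 = 1)
    (hA : ∀ ν : ℕ, 1 ≤ ν → A ν =
      (q ^ ν)⁻¹ + (if Even ν then (q ^ (3 * ν / 2))⁻¹ else 0) +
        (1 - (q ^ 2)⁻¹) *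
          ∑ p ∈ (range (ν + 1) ×ˢ range (ν + 1)).filter
              (fun p => 0 < p.1 ∧ p.1 < p.2 ∧ p.1 + p.2 = ν),
            (q ^ (2 * p.1 + p.2))⁻¹) :
    (1 - PowerSeries.C q⁻¹ * PowerSeries.X) *
      (1 - PowerSeries.C (q⁻¹ ^ 3) * PowerSeries.X ^ 2) * PowerSeries.mk A =
    1 - PowerSeries.C (q⁻¹ ^ 6) * PowerSeries.X ^ 3 :=
  A_star_euler_factor_commRing q⁻¹ A hA0 fun ν hν => by simpa only [inv_pow] using hA ν hν

/-- The generating function of the local masses A*_{p;n=3} at an odd prime with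
residue field size q satisfies
`(1 − q⁻¹X)(1 − q⁻³X²) ∑ A_ν X^ν = 1 − q⁻⁶X³`. -/
theorem A_star_euler_factor (q : ℝ) (hq : 1 < q) (A : ℕ → ℝ)
    (hA0 : A 0 = 1)
    (hA : ∀ ν : ℕ, 1 ≤ ν → A ν =
      (q ^ ν)⁻¹ + (if Even ν then (q ^ (3 * ν / 2))⁻¹ else 0) +
        (1 - (q ^ 2)⁻¹) *
          ∑ p ∈ (range (ν + 1) ×ˢ range (ν + 1)).filter
              (fun p => 0 < p.1 ∧ p.1 < p.2 ∧ p.1 + p.2 = ν),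
            (q ^ (2 * p.1 + p.2))⁻¹) :
    (1 - PowerSeries.C q⁻¹ * PowerSeries.X) *
      (1 - PowerSeries.C (q⁻¹ ^ 3) * PowerSeries.X ^ 2) * PowerSeries.mk A =
    1 - PowerSeries.C (q⁻¹ ^ 6) * PowerSeries.X ^ 3 :=
  A_star_euler_factor_general q A hA0 hA
end

section
/- Let q be a real number with q > 1 and let ε ∈ {1, −1}. Define rational numbers B_ν for ν ∈ ℕ by: B_0 = 1; for ν ≥ 1, B_ν = [ν even]·q^(−ν) + [ν odd]·ε·q^(−ν−1) + [4 ∣ ν]·q^(−3ν/2) + [ν ≡ 2 mod 4]·q^(−3ν/2 − 1) + (1 − q^(−2)) · ∑_{0 < a < b, a+b=ν, a,b both even} q^(−(2a+b)). Then in ℝ[[X]] one has (1 − q^(−2)X²) · ∑_{ν ≥ 0} B_ν X^ν = 1 + ε·q^(−2)X + q^(−4)X². -/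
/-!
For `ν ≥ 1` the coefficient collapses to `B_ν = x^ν + x^(ν+2)` (`ν` even) or `ε x^(ν+1)`
(`ν` odd), where `x = q⁻¹`: for `ν = 2m` the pairs `(a, b)` are `a = 2j + 2`, the weighted
sum telescopes to `x^(2m+2) - x^(3m)` resp. `x^(2m+2) - x^(3m+1)`, and this cancels the
`[4 ∣ ν]`, `[ν ≡ 2 mod 4]` terms. Multiplying by `1 - x²X²` then kills every coefficient
of degree `≥ 3`, since `B_ν - x² B_(ν-2) = 0` there.
-/

open PowerSeries Finset

theorem sum_even_pairs_eq_sum_range {M : Type*} [AddCommMonoid M] (f : ℕ → M) (m : ℕ) :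
    ∑ p ∈ (range (2 * m + 1) ×ˢ range (2 * m + 1)).filter
        (fun p => 0 < p.1 ∧ p.1 < p.2 ∧ p.1 + p.2 = 2 * m ∧ Even p.1 ∧ Even p.2),
      f (2 * p.1 + p.2)
    = ∑ j ∈ range ((m - 1) / 2), f (2 * m + 2 + 2 * j) := by
  refine sum_nbij' (fun p => p.1 / 2 - 1) (fun j => (2 * j + 2, 2 * m - (2 * j + 2)))
    ?_ ?_ ?_ ?_ ?_ <;>
  simp only [mem_filter, mem_product, mem_range, Nat.even_iff, Prod.forall, Prod.mk.injEq] <;>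
  intros <;> first | omega | congr 1; omega

section CommRing

variable {R : Type*} [CommRing R]

theorem one_sub_sq_mul_sum_pow (x : R) (a t : ℕ) :
    (1 - x ^ 2) * ∑ j ∈ range t, x ^ (a + 2 * j) = x ^ a - x ^ (a + 2 * t) := by
  have step : ∀ j, (1 - x ^ 2) * x ^ (a + 2 * j) = x ^ (a + 2 * j) - x ^ (a + 2 * (j + 1)) :=
    fun j => by ring
  simp only [mul_sum, step, sum_range_sub', mul_zero, add_zero]

theorem B_star_closed_form (x ε : R) (B : ℕ → R)
    (hB : ∀ ν : ℕ, 1 ≤ ν → B ν =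
      (if Even ν then x ^ ν else 0) +
      (if Odd ν then ε * x ^ (ν + 1) else 0) +
      (if 4 ∣ ν then x ^ (3 * ν / 2) else 0) +
      (if ν % 4 = 2 then x ^ (3 * ν / 2 + 1) else 0) +
        (1 - x ^ 2) *
          ∑ p ∈ (range (ν + 1) ×ˢ range (ν + 1)).filter
              (fun p => 0 < p.1 ∧ p.1 < p.2 ∧ p.1 + p.2 = ν ∧ Even p.1 ∧ Even p.2),
            x ^ (2 * p.1 + p.2))
    (ν : ℕ) (hν : 1 ≤ ν) :
    B ν = if Even ν then x ^ ν + x ^ (ν + 2) else ε * x ^ (ν + 1) := by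
  rw [hB ν hν]
  rcases Nat.even_or_odd' ν with ⟨m, rfl | rfl⟩
  · have heven : Even (2 * m) := even_two_mul m
    rw [sum_even_pairs_eq_sum_range, one_sub_sq_mul_sum_pow, if_pos heven,
      if_neg (Nat.not_odd_iff_even.mpr heven), if_pos heven]
    rcases Nat.even_or_odd' m with ⟨k, rfl | rfl⟩
    · rw [if_pos (by omega), if_neg (by omega),
        show 3 * (2 * (2 * k)) / 2 = 2 * (2 * k) + 2 + 2 * ((2 * k - 1) / 2) by omega]
      ring
    · rw [if_neg (by omega), if_pos (by omega),
        show 3 * (2 * (2 * k + 1)) / 2 + 1 = 2 * (2 * k + 1) + 2 + 2 * ((2 * k + 1 - 1) / 2)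
          by omega]
      ring
  · have hodd : Odd (2 * m + 1) := odd_two_mul_add_one m
    have hno_pairs : ((range (2 * m + 1 + 1) ×ˢ range (2 * m + 1 + 1)).filter
        (fun p => 0 < p.1 ∧ p.1 < p.2 ∧ p.1 + p.2 = 2 * m + 1 ∧ Even p.1 ∧ Even p.2)) = ∅ :=
      filter_false_of_mem fun _ _ ⟨_, _, hsum, ha, hb⟩ =>
        Nat.not_even_iff_odd.mpr hodd (hsum ▸ ha.add hb)
    rw [hno_pairs, sum_empty, if_neg (Nat.not_even_iff_odd.mpr hodd), if_pos hodd,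
      if_neg (by omega), if_neg (by omega), if_neg (Nat.not_even_iff_odd.mpr hodd)]
    ring

theorem one_sub_C_mul_X_sq_mul_mk (x ε : R) (B : ℕ → R) (hB0 : B 0 = 1)
    (hB : ∀ ν, 1 ≤ ν → B ν = if Even ν then x ^ ν + x ^ (ν + 2) else ε * x ^ (ν + 1)) :
    (1 - C (x ^ 2) * X ^ 2) * PowerSeries.mk B = 1 + C (ε * x ^ 2) * X + C (x ^ 4) * X ^ 2 := by
  ext n
  rw [sub_mul, one_mul, mul_assoc]
  simp only [map_sub, map_add, coeff_C_mul, coeff_mk, coeff_one, coeff_X, coeff_X_pow,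
    coeff_X_pow_mul']
  rcases n with _ | _ | _ | k
  · simp [hB0]
  · simp [hB]
  · simp [hB, hB0]
  · by_cases hk : Even k <;> simp [hB, hk, parity_simps] <;> ring

end CommRing

theorem B_star_euler_factor_general (q : ℝ) (ε : ℝ)
    (B : ℕ → ℝ) (hB0 : B 0 = 1)
    (hB : ∀ ν : ℕ, 1 ≤ ν → B ν =
      (if Even ν then (q ^ ν)⁻¹ else 0) +
      (if Odd ν then ε * (q ^ (ν + 1))⁻¹ else 0) +
      (if 4 ∣ ν then (q ^ (3 * ν / 2))⁻¹ else 0) +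
      (if ν % 4 = 2 then (q ^ (3 * ν / 2 + 1))⁻¹ else 0) +
        (1 - (q ^ 2)⁻¹) *
          ∑ p ∈ (range (ν + 1) ×ˢ range (ν + 1)).filter
              (fun p => 0 < p.1 ∧ p.1 < p.2 ∧ p.1 + p.2 = ν ∧ Even p.1 ∧ Even p.2),
            (q ^ (2 * p.1 + p.2))⁻¹) :
    (1 - PowerSeries.C (R := ℝ) (q⁻¹ ^ 2) * PowerSeries.X ^ 2) * PowerSeries.mk B =
      1 + PowerSeries.C (R := ℝ) (ε * q⁻¹ ^ 2) * PowerSeries.X +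
        PowerSeries.C (R := ℝ) (q⁻¹ ^ 4) * PowerSeries.X ^ 2 := by
  simp only [← inv_pow] at hB
  exact one_sub_C_mul_X_sq_mul_mk q⁻¹ ε B hB0 (B_star_closed_form q⁻¹ ε B hB)

/-- The generating function of the local masses B*_{p;n=3} at an odd prime with
residue field size q and ε = (−1/p) satisfies
`(1 − q⁻²X²) ∑ B_ν X^ν = 1 + ε·q⁻²X + q⁻⁴X²`. -/
theorem B_star_euler_factor (q : ℝ) (hq : 1 < q) (ε : ℝ) (hε : ε = 1 ∨ ε = -1)
    (B : ℕ → ℝ) (hB0 : B 0 = 1)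
    (hB : ∀ ν : ℕ, 1 ≤ ν → B ν =
      (if Even ν then (q ^ ν)⁻¹ else 0) +
      (if Odd ν then ε * (q ^ (ν + 1))⁻¹ else 0) +
      (if 4 ∣ ν then (q ^ (3 * ν / 2))⁻¹ else 0) +
      (if ν % 4 = 2 then (q ^ (3 * ν / 2 + 1))⁻¹ else 0) +
        (1 - (q ^ 2)⁻¹) *
          ∑ p ∈ (range (ν + 1) ×ˢ range (ν + 1)).filter
              (fun p => 0 < p.1 ∧ p.1 < p.2 ∧ p.1 + p.2 = ν ∧ Even p.1 ∧ Even p.2),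
            (q ^ (2 * p.1 + p.2))⁻¹) :
    (1 - PowerSeries.C (R := ℝ) (q⁻¹ ^ 2) * PowerSeries.X ^ 2) * PowerSeries.mk B =
      1 + PowerSeries.C (R := ℝ) (ε * q⁻¹ ^ 2) * PowerSeries.X +
        PowerSeries.C (R := ℝ) (q⁻¹ ^ 4) * PowerSeries.X ^ 2 :=
  B_star_euler_factor_general q ε B hB0 hB
end
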